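/- arXiv:1606.07308 — 3 statements merged into one kernel-verified Lean document; each statement's English description precedes it below -/
import Mathlib

section
/- Let k > 0, K > k, κ = min(1, K/k − 1), m > 0, Λ > 0, ε₁ ∈ (0, m), R > 0, c < ∞, and let f: ℝ → ℝ satisfy |f(τ) − |τ|^k| ≤ c|τ|^K and |f(τ)| ≤ (c+1)|τ|^k for all τ ∈ ℝ. Then there exists C < ∞ such that for every ε ∈ (0, ε₁), setting ω = √(m²−ε²), and all real numbers V̂, Û, Ṽ, Ũ ∈ [−Λ, Λ], with V = V̂ + Ṽ, U = Û + Ũ, satisfying ε₁|U| ≤ V/2, |Ṽ| ≤ V̂/2, and |Û| ≤ R·V̂, the following three inequalities hold: (i) | G₁ − (1/(m+ω) − 1/(2m)) V̂ − k ε² V^{2k−1} U² | ≤ C ( (ε^{2K/k−2} + ε⁴) V̂^{2k+1} + V̂^{2k−1} Ṽ² ); (ii) | G₂ − ε² V̂^{2k} Û − (m−ω) Û | ≤ C ( ε^{2+2κ} V̂^{2k} + ε² V̂^{2k−1} |Ṽ| ) |U| + ε² V̂^{2k} |Ũ|; (iii) |G₁| + |G₂| ≤ C ε^{2κ} V̂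 + C V̂^{2k−1} Ṽ². -/
/-!
On the admissible region `0 < V̂ ≤ Λ`, `|Ṽ| ≤ V̂/2`, `ε₁|U| ≤ V/2`, `0 < ε < ε₁` one has `V ≍ V̂`,
`|U| ≲ V̂` and `A := V² - ε²U² ∈ [3V²/4, V²]`, so each inequality is a uniform big-O statement on
the principal filter of this region. The argument `τ = ε^{2/k} A` of `f` satisfies `τ^k = ε²A^k`,
hence `f τ = ε²A^k + O(ε^{2K/k} V̂^{2k})`. After this substitution the remainder in (i) is the sum
of the second-order Taylor remainders of `s ↦ s^k` at `V²` (of size `ε⁴V̂^{2k+1}`) and of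
`s ↦ s^{2k+1}` at `V̂` (of size `V̂^{2k-1}Ṽ²`) and of the error of `f`; in (ii) the Lipschitz bound
`A^k - V̂^{2k} = O(ε²V̂^{2k} + V̂^{2k-1}|Ṽ|)` plays the role of the Taylor expansion. For (iii),
every term left over from (i) carries a factor `ε²`, as do `1/(m+ω) - 1/(2m)` and `m - ω`.
If `V̂ = 0`, all variables vanish.
-/

open Real Set Filter Asymptotics

theorem exists_abs_rpow_sub_rpow_le (p : ℝ) {l u : ℝ} (hl : 0 < l) :
    ∃ L ≥ 0, ∀ s ∈ Icc l u, ∀ t ∈ Icc l u, |s ^ p - t ^ p| ≤ L * |s - t| := by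
  have hdiff : ContDiffOn ℝ 1 (fun t : ℝ => t ^ p) (Icc l u) := fun t ht =>
    (contDiffAt_rpow_const_of_ne (hl.trans_le ht.1).ne').contDiffWithinAt
  obtain ⟨L, hL⟩ := hdiff.exists_lipschitzOnWith one_ne_zero (convex_Icc l u) isCompact_Icc
  exact ⟨L, L.2, fun s hs t ht => hL.dist_le_mul s hs t ht⟩

theorem exists_abs_rpow_sub_one_sub_le_sq (p : ℝ) :
    ∃ D ≥ 0, ∀ t ∈ Icc (1 / 2 : ℝ) (3 / 2), |t ^ p - 1 - p * (t - 1)| ≤ D * (t - 1) ^ 2 := by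
  obtain ⟨L, hL0, hL⟩ :=
    exists_abs_rpow_sub_rpow_le (p - 1) (l := 1 / 2) (u := 3 / 2) (by norm_num)
  refine ⟨|p| * L, by positivity, fun t ht => ?_⟩
  have hseg : uIcc 1 t ⊆ Icc (1 / 2 : ℝ) (3 / 2) :=
    uIcc_subset_Icc ⟨by norm_num, by norm_num⟩ ht
  -- mean value theorem for `s ↦ s ^ p - p * s`, whose derivative is `O(|s - 1|)` on `[1, t]`
  have hderiv : ∀ s ∈ uIcc 1 t,
      HasDerivWithinAt (fun s => s ^ p - p * s) (p * (s ^ (p - 1) - 1)) (uIcc 1 t) s := by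
    intro s hs
    have hs0 : s ≠ 0 := ((by norm_num : (0 : ℝ) < 1 / 2).trans_le (hseg hs).1).ne'
    have h : HasDerivAt (fun s => s ^ p - p * s) (p * s ^ (p - 1) - p * 1) s :=
      (hasDerivAt_rpow_const (Or.inl hs0)).sub ((hasDerivAt_id' s).const_mul p)
    exact (h.congr_deriv (by ring)).hasDerivWithinAt
  have hbound : ∀ s ∈ uIcc 1 t, ‖p * (s ^ (p - 1) - 1)‖ ≤ |p| * L * |t - 1| := by
    intro s hs
    have := hL s (hseg hs) 1 ⟨by norm_num, by norm_num⟩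
    rw [one_rpow] at this
    rw [norm_mul, norm_eq_abs, norm_eq_abs, mul_assoc]
    gcongr
    exact this.trans (mul_le_mul_of_nonneg_left (abs_sub_left_of_mem_uIcc hs) hL0)
  have := (convex_uIcc 1 t).norm_image_sub_le_of_norm_hasDerivWithin_le hderiv hbound
    left_mem_uIcc right_mem_uIcc
  simp only [one_rpow, mul_one, norm_eq_abs] at this
  calc |t ^ p - 1 - p * (t - 1)| = |t ^ p - p * t - (1 - p)| := by ring_nf
    _ ≤ |p| * L * |t - 1| * |t - 1| := this
    _ = |p| * L * (t - 1) ^ 2 := by rw [mul_assoc, ← sq, sq_abs]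

theorem exists_abs_rpow_sub_rpow_le_mul (p : ℝ) {l u : ℝ} (hl : 0 < l) (h1 : 1 ∈ Icc l u) :
    ∃ L ≥ 0, ∀ a > 0, ∀ b ∈ Icc (l * a) (u * a),
      |b ^ p - a ^ p| ≤ L * a ^ (p - 1) * |b - a| := by
  obtain ⟨L, hL0, hL⟩ := exists_abs_rpow_sub_rpow_le p (u := u) hl
  refine ⟨L, hL0, fun a ha b hb => ?_⟩
  have ht : b / a ∈ Icc l u := ⟨(le_div_iff₀ ha).2 hb.1, (div_le_iff₀ ha).2 hb.2⟩
  have hb0 : 0 ≤ b := (mul_pos hl ha).le.trans hb.1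
  calc |b ^ p - a ^ p| = a ^ p * |(b / a) ^ p - 1 ^ p| := by
        rw [div_rpow hb0 ha.le, one_rpow, ← abs_of_pos (rpow_pos_of_pos ha p), ← abs_mul,
          abs_of_pos (rpow_pos_of_pos ha p)]
        field_simp
    _ ≤ a ^ p * (L * |b / a - 1|) := by gcongr; exact hL _ ht _ h1
    _ = L * a ^ (p - 1) * |b - a| := by
        rw [rpow_sub_one ha.ne', div_sub_one ha.ne', abs_div, abs_of_pos ha]
        field_simp

theorem exists_abs_rpow_sub_taylor_le (p : ℝ) :
    ∃ D ≥ 0, ∀ a > 0, ∀ b, |b - a| ≤ a / 2 →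
      |b ^ p - a ^ p - p * a ^ (p - 1) * (b - a)| ≤ D * a ^ (p - 2) * (b - a) ^ 2 := by
  obtain ⟨D, hD0, hD⟩ := exists_abs_rpow_sub_one_sub_le_sq p
  refine ⟨D, hD0, fun a ha b hb => ?_⟩
  have ht : b / a ∈ Icc (1 / 2 : ℝ) (3 / 2) := by
    obtain ⟨h₁, h₂⟩ := abs_le.1 hb
    exact ⟨(le_div_iff₀ ha).2 (by linarith), (div_le_iff₀ ha).2 (by linarith)⟩
  have hb0 : 0 ≤ b := by linarith [(abs_le.1 hb).1]
  calc |b ^ p - a ^ p - p * a ^ (p - 1) * (b - a)|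
      = a ^ p * |(b / a) ^ p - 1 - p * (b / a - 1)| := by
        rw [div_rpow hb0 ha.le, rpow_sub_one ha.ne', ← abs_of_pos (rpow_pos_of_pos ha p),
          ← abs_mul, abs_of_pos (rpow_pos_of_pos ha p)]
        field_simp
    _ ≤ a ^ p * (D * (b / a - 1) ^ 2) := by gcongr; exact hD _ ht
    _ = D * a ^ (p - 2) * (b - a) ^ 2 := by
        rw [show p - 2 = p - (2 : ℕ) by norm_num, rpow_sub_natCast ha.ne']
        field_simp

theorem sqrt_sq_sub_sq_le {m : ℝ} (hm : 0 ≤ m) (ε : ℝ) : √(m ^ 2 - ε ^ 2) ≤ m :=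
  (sqrt_le_sqrt (by nlinarith)).trans_eq (sqrt_sq hm)

theorem sub_sqrt_sq_sub_sq_le {m : ℝ} (hm : 0 < m) (ε : ℝ) :
    m - √(m ^ 2 - ε ^ 2) ≤ ε ^ 2 / m := by
  have hω := sqrt_nonneg (m ^ 2 - ε ^ 2)
  have hω2 : m ^ 2 - ε ^ 2 ≤ √(m ^ 2 - ε ^ 2) ^ 2 := by
    rw [sq_sqrt']; exact le_max_left _ _
  rw [le_div_iff₀ hm]
  nlinarith [sqrt_sq_sub_sq_le hm.le ε]

theorem one_div_add_sqrt_sub_le {m : ℝ} (hm : 0 < m) (ε : ℝ) :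
    1 / (m + √(m ^ 2 - ε ^ 2)) - 1 / (2 * m) ≤ ε ^ 2 / (2 * m ^ 3) := by
  have hω := sqrt_nonneg (m ^ 2 - ε ^ 2)
  have h := sub_sqrt_sq_sub_sq_le hm ε
  rw [le_div_iff₀ hm] at h
  rw [div_sub_div _ _ (by positivity) (by positivity),
    div_le_div_iff₀ (by positivity) (by positivity)]
  nlinarith [mul_le_mul_of_nonneg_left h (by positivity : (0:ℝ) ≤ 2 * m ^ 2),
    mul_nonneg (mul_nonneg (sq_nonneg ε) hm.le) hω]

theorem one_div_add_sqrt_sub_nonneg {m : ℝ} (hm : 0 < m) (ε : ℝ) :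
    0 ≤ 1 / (m + √(m ^ 2 - ε ^ 2)) - 1 / (2 * m) :=
  sub_nonneg.2 <|
    one_div_le_one_div_of_le (by positivity) (by linarith [sqrt_sq_sub_sq_le hm.le ε])

theorem isBigO_rpow_of_le {α : Type*} {l : Filter α} {φ : α → ℝ} {B a b : ℝ}
    (hφ : ∀ᶠ x in l, 0 < φ x ∧ φ x ≤ B) (hab : a ≤ b) :
    (fun x => φ x ^ b) =O[l] (fun x => φ x ^ a) := by
  refine IsBigO.of_bound (B ^ (b - a)) (hφ.mono fun x ⟨hpos, hle⟩ => ?_)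
  rw [norm_of_nonneg (rpow_nonneg hpos.le _), norm_of_nonneg (rpow_nonneg hpos.le _),
    show b = (b - a) + a by ring, rpow_add hpos, add_sub_cancel_right]
  gcongr

theorem Asymptotics.IsBigO.add_add_of_nonneg {α : Type*} {l : Filter α}
    {f₁ f₂ g₁ g₂ : α → ℝ} (h₁ : f₁ =O[l] g₁) (h₂ : f₂ =O[l] g₂) (hg₁ : ∀ᶠ x in l, 0 ≤ g₁ x)
    (hg₂ : ∀ᶠ x in l, 0 ≤ g₂ x) :
    (fun x => f₁ x + f₂ x) =O[l] (fun x => g₁ x + g₂ x) :=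
  (h₁.add_add h₂).trans_eventuallyEq <| by
    filter_upwards [hg₁, hg₂] with x h₁ h₂
    rw [norm_of_nonneg h₁, norm_of_nonneg h₂]

theorem Asymptotics.isBigO_self_add_of_nonneg {α : Type*} {l : Filter α} {g₁ g₂ : α → ℝ}
    (hg₁ : ∀ᶠ x in l, 0 ≤ g₁ x) (hg₂ : ∀ᶠ x in l, 0 ≤ g₂ x) :
    g₁ =O[l] (fun x => g₁ x + g₂ x) :=
  IsBigO.of_bound' <| by
    filter_upwards [hg₁, hg₂] with x h₁ h₂
    rw [norm_of_nonneg h₁, norm_of_nonneg (add_nonneg h₁ h₂)]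
    linarith

theorem Asymptotics.IsBigO.exists_forall_abs_le {α : Type*} {s : Set α} {f g : α → ℝ}
    (h : f =O[𝓟 s] g) : ∃ C, ∀ C' ≥ C, ∀ x ∈ s, 0 ≤ g x → |f x| ≤ C' * g x := by
  obtain ⟨C, hC⟩ := isBigO_principal.1 h
  refine ⟨C, fun C' hC' x hx hg => (hC x hx).trans ?_⟩
  rw [norm_of_nonneg hg]
  exact mul_le_mul_of_nonneg_right hC' hg

theorem Real.rpow_two_mul {x : ℝ} (hx : 0 ≤ x) (p : ℝ) : x ^ (2 * p) = (x ^ 2) ^ p := by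
  rw [← rpow_natCast_mul hx]; norm_num

structure Point where
  ε : ℝ
  Vh : ℝ
  Uh : ℝ
  Vt : ℝ
  Ut : ℝ

namespace Point

section

variable (x : Point) (f : ℝ → ℝ) (k m : ℝ)

def V : ℝ := x.Vh + x.Vt

def U : ℝ := x.Uh + x.Ut

def A : ℝ := x.V ^ 2 - x.ε ^ 2 * x.U ^ 2

noncomputable def τ : ℝ := x.ε ^ (2 / k) * x.A

noncomputable def ω : ℝ := √(m ^ 2 - x.ε ^ 2)

noncomputable def G₁ : ℝ :=
  -(x.ε ^ (-2 : ℝ)) * f (x.τ k) * x.V + x.Vh ^ (2 * k + 1) + (1 + 2 * k) * x.Vh ^ (2 * k) * x.Vt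
    + (1 / (m + x.ω m) - 1 / (2 * m)) * x.Vh

noncomputable def G₂ : ℝ := f (x.τ k) * x.U + (m - x.ω m) * x.Uh

structure Admissible (ε₁ Λ R : ℝ) : Prop where
  ε_pos : 0 < x.ε
  ε_lt : x.ε < ε₁
  Vh_pos : 0 < x.Vh
  Vh_le : x.Vh ≤ Λ
  abs_Vt_le : |x.Vt| ≤ x.Vh / 2
  abs_U_le : ε₁ * |x.U| ≤ x.V / 2
  abs_Uh_le : |x.Uh| ≤ R * x.Vh

theorem V_sub_Vh : x.V - x.Vh = x.Vt := add_sub_cancel_left _ _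

theorem A_le : x.A ≤ x.V ^ 2 := by
  unfold A; nlinarith [sq_nonneg x.ε, sq_nonneg x.U]

end

theorem τ_rpow (k : ℝ) {x : Point} (hε : 0 < x.ε) (hA : 0 ≤ x.A) (p : ℝ) :
    x.τ k ^ p = x.ε ^ (2 * p / k) * x.A ^ p := by
  rw [τ, mul_rpow (by positivity) hA, ← rpow_mul hε.le]
  ring_nf

namespace Admissible

variable {x : Point} {ε₁ Λ R : ℝ}

theorem half_Vh_le_V (hx : x.Admissible ε₁ Λ R) : x.Vh / 2 ≤ x.V := by
  have := (abs_le.1 hx.abs_Vt_le).1; unfold V; linarith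

theorem V_le (hx : x.Admissible ε₁ Λ R) : x.V ≤ 3 / 2 * x.Vh := by
  have := (abs_le.1 hx.abs_Vt_le).2; unfold V; linarith

theorem V_pos (hx : x.Admissible ε₁ Λ R) : 0 < x.V := by
  linarith [hx.half_Vh_le_V, hx.Vh_pos]

theorem ε₁_pos (hx : x.Admissible ε₁ Λ R) : 0 < ε₁ := hx.ε_pos.trans hx.ε_lt

theorem U_sq_le (hx : x.Admissible ε₁ Λ R) : x.U ^ 2 ≤ x.V ^ 2 / (4 * ε₁ ^ 2) := by
  have h := pow_le_pow_left₀ (mul_nonneg hx.ε₁_pos.le (abs_nonneg _)) hx.abs_U_le 2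
  rw [mul_pow, sq_abs] at h
  rw [le_div_iff₀ (by nlinarith [hx.ε₁_pos])]
  linarith

theorem ε_sq_mul_U_sq_le (hx : x.Admissible ε₁ Λ R) : x.ε ^ 2 * x.U ^ 2 ≤ x.V ^ 2 / 4 := by
  have h := hx.U_sq_le
  rw [le_div_iff₀ (by nlinarith [hx.ε₁_pos])] at h
  have : x.ε ^ 2 ≤ ε₁ ^ 2 := pow_le_pow_left₀ hx.ε_pos.le hx.ε_lt.le 2
  nlinarith [sq_nonneg x.U]

theorem A_pos (hx : x.Admissible ε₁ Λ R) : 0 < x.A := by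
  have := hx.ε_sq_mul_U_sq_le; have := hx.V_pos; unfold A; nlinarith

theorem A_mem_Icc (hx : x.Admissible ε₁ Λ R) :
    x.A ∈ Icc (3 / 16 * x.Vh ^ 2) (9 / 4 * x.Vh ^ 2) := by
  have := hx.ε_sq_mul_U_sq_le
  have := hx.half_Vh_le_V
  have := hx.V_le
  have := hx.Vh_pos
  exact ⟨by unfold A; nlinarith, by nlinarith [x.A_le]⟩

end Admissible

variable {ε₁ Λ R : ℝ}

local notation "𝓐" => 𝓟 (Set.ofPred fun x => Admissible x ε₁ Λ R)

theorem isBigO_ε_rpow {a b : ℝ} (hab : a ≤ b) :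
    (fun x : Point => x.ε ^ b) =O[𝓐] (fun x => x.ε ^ a) :=
  isBigO_rpow_of_le (B := ε₁) (eventually_principal.2 fun _ hx => ⟨hx.ε_pos, hx.ε_lt.le⟩) hab

theorem isBigO_Vh_rpow {a b : ℝ} (hab : a ≤ b) :
    (fun x : Point => x.Vh ^ b) =O[𝓐] (fun x => x.Vh ^ a) :=
  isBigO_rpow_of_le (B := Λ) (eventually_principal.2 fun _ hx => ⟨hx.Vh_pos, hx.Vh_le⟩) hab

theorem isBigO_Vh_rpow_of_one_le {p : ℝ} (hp : 1 ≤ p) :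
    (fun x : Point => x.Vh ^ p) =O[𝓐] (fun x => x.Vh) :=
  (isBigO_Vh_rpow hp).congr_right fun _ => rpow_one _

theorem isBigO_ε_sq {κ : ℝ} (hκ : κ ≤ 1) :
    (fun x : Point => x.ε ^ 2) =O[𝓐] (fun x => x.ε ^ (2 * κ)) :=
  (isBigO_ε_rpow (by linarith : 2 * κ ≤ 2)).congr_left fun _ => rpow_two _

theorem isBigO_V_rpow (p : ℝ) : (fun x : Point => x.V ^ p) =O[𝓐] (fun x => x.Vh ^ p) :=
  isBigO_principal.2 ⟨(1 / 2) ^ p + (3 / 2) ^ p, fun x (hx : x.Admissible ε₁ Λ R) => by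
    have hVh := hx.Vh_pos
    rw [norm_of_nonneg (rpow_nonneg hx.V_pos.le _), norm_of_nonneg (rpow_nonneg hVh.le _),
      add_mul, ← mul_rpow (by norm_num) hVh.le, ← mul_rpow (by norm_num) hVh.le]
    rcases le_total 0 p with hp | hp
    · exact le_add_of_nonneg_of_le (by positivity) (rpow_le_rpow hx.V_pos.le hx.V_le hp)
    · refine le_add_of_le_of_nonneg ?_ (by positivity)
      exact rpow_le_rpow_of_nonpos (by positivity) (by linarith [hx.half_Vh_le_V]) hp⟩

theorem isBigO_V : (fun x : Point => x.V) =O[𝓐] (fun x => x.Vh) :=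
  (isBigO_V_rpow 1).congr (fun _ => rpow_one _) (fun _ => rpow_one _)

theorem isBigO_A_rpow {p : ℝ} (hp : 0 ≤ p) :
    (fun x : Point => x.A ^ p) =O[𝓐] (fun x => x.Vh ^ (2 * p)) :=
  (isBigO_principal.2 ⟨1, fun x (hx : x.Admissible ε₁ Λ R) => by
    rw [norm_of_nonneg (rpow_nonneg hx.A_pos.le _), norm_of_nonneg (rpow_nonneg hx.V_pos.le _),
      one_mul, rpow_two_mul hx.V_pos.le]
    exact rpow_le_rpow hx.A_pos.le x.A_le hp⟩).trans (isBigO_V_rpow _)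

theorem isBigO_U : (fun x : Point => x.U) =O[𝓐] (fun x => x.Vh) :=
  isBigO_principal.2 ⟨3 / (4 * ε₁), fun x (hx : x.Admissible ε₁ Λ R) => by
    have := hx.abs_U_le
    have := hx.V_le
    rw [norm_eq_abs, norm_of_nonneg hx.Vh_pos.le, div_mul_eq_mul_div,
      le_div_iff₀ (by linarith [hx.ε₁_pos])]
    nlinarith⟩

theorem isBigO_taylor_U (k : ℝ) :
    (fun x : Point =>
        x.A ^ k * x.V - x.V ^ (2 * k + 1) + k * x.ε ^ 2 * x.V ^ (2 * k - 1) * x.U ^ 2)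
      =O[𝓐] (fun x => x.ε ^ 4 * x.Vh ^ (2 * k + 1)) := by
  obtain ⟨D, hD0, hD⟩ := exists_abs_rpow_sub_taylor_le k
  refine (isBigO_principal.2 ⟨D / (16 * ε₁ ^ 4), fun x (hx : x.Admissible ε₁ Λ R) => ?_⟩).trans
    ((isBigO_refl _ _).mul (isBigO_V_rpow _))
  have hV := hx.V_pos
  have hε₁ := hx.ε₁_pos
  have hA : x.A - x.V ^ 2 = -(x.ε ^ 2 * x.U ^ 2) := by unfold A; ring
  have hTaylor := hD (x.V ^ 2) (by positivity) x.A <| by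
    rw [hA, abs_neg, abs_of_nonneg (by positivity)]
    linarith [hx.ε_sq_mul_U_sq_le, sq_nonneg x.V]
  set W := (x.V ^ 2) ^ k
  rw [hA, neg_sq] at hTaylor
  rw [rpow_sub_one (by positivity), show k - 2 = k - (2 : ℕ) by norm_num,
    rpow_sub_natCast (by positivity)] at hTaylor
  rw [norm_eq_abs, norm_of_nonneg (by positivity), rpow_add_one hV.ne', rpow_sub_one hV.ne',
    rpow_two_mul hV.le]
  calc |x.A ^ k * x.V - W * x.V + k * x.ε ^ 2 * (W / x.V) * x.U ^ 2|
      = x.V * |x.A ^ k - W - k * (W / x.V ^ 2) * -(x.ε ^ 2 * x.U ^ 2)| := by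
        rw [← abs_of_pos hV, ← abs_mul, abs_of_pos hV]; congr 1; field_simp; ring
    _ ≤ x.V * (D * (W / (x.V ^ 2) ^ 2) * (x.ε ^ 2 * x.U ^ 2) ^ 2) := by gcongr
    _ ≤ x.V * (D * (W / (x.V ^ 2) ^ 2) * (x.ε ^ 2 * (x.V ^ 2 / (4 * ε₁ ^ 2))) ^ 2) := by
        gcongr; exact hx.U_sq_le
    _ = D / (16 * ε₁ ^ 4) * (x.ε ^ 4 * (W * x.V)) := by field_simp; ring

theorem isBigO_taylor_Vt (k : ℝ) :
    (fun x : Point =>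
        x.V ^ (2 * k + 1) - x.Vh ^ (2 * k + 1) - (1 + 2 * k) * x.Vh ^ (2 * k) * x.Vt)
      =O[𝓐] (fun x => x.Vh ^ (2 * k - 1) * x.Vt ^ 2) := by
  obtain ⟨D, -, hD⟩ := exists_abs_rpow_sub_taylor_le (2 * k + 1)
  refine isBigO_principal.2 ⟨D, fun x (hx : x.Admissible ε₁ Λ R) => ?_⟩
  have h := hD x.Vh hx.Vh_pos x.V (by rw [x.V_sub_Vh]; exact hx.abs_Vt_le)
  rw [x.V_sub_Vh, show 2 * k + 1 - 1 = 2 * k by ring,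
    show 2 * k + 1 - 2 = 2 * k - 1 by ring] at h
  rw [norm_eq_abs, norm_of_nonneg (by have := hx.Vh_pos; positivity), ← mul_assoc,
    add_comm 1 (2 * k)]
  exact h

theorem isBigO_f_τ_sub {f : ℝ → ℝ} {k K c : ℝ} (hk : 0 < k) (hkK : k ≤ K)
    (hf : ∀ τ, |f τ - |τ| ^ k| ≤ c * |τ| ^ K) :
    (fun x : Point => f (x.τ k) - x.ε ^ 2 * x.A ^ k)
      =O[𝓐] (fun x => x.ε ^ (2 * K / k) * x.Vh ^ (2 * k)) := by
  refine (isBigO_principal.2 ⟨c, fun x (hx : x.Admissible ε₁ Λ R) => ?_⟩).trans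
    ((isBigO_refl _ _).mul ((isBigO_A_rpow (by linarith)).trans (isBigO_Vh_rpow (by linarith))))
  have hτ : 0 ≤ x.τ k := by have := hx.ε_pos; have := hx.A_pos; unfold τ; positivity
  have h := hf (x.τ k)
  rw [abs_of_nonneg hτ, τ_rpow k hx.ε_pos hx.A_pos.le, τ_rpow k hx.ε_pos hx.A_pos.le,
    mul_div_cancel_right₀ _ hk.ne', rpow_two] at h
  rwa [norm_eq_abs, norm_of_nonneg (by have := hx.ε_pos; have := hx.A_pos; positivity)]

theorem isBigO_A_sub_Vh_sq :
    (fun x : Point => x.A - x.Vh ^ 2) =O[𝓐] (fun x => x.ε ^ 2 * x.Vh ^ 2 + x.Vh * |x.Vt|) := by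
  have hpos : ∀ᶠ x : Point in 𝓐, 0 < x.Vh := eventually_principal.2 fun x hx => hx.Vh_pos
  have hεU : (fun x : Point => x.ε ^ 2 * x.U ^ 2) =O[𝓐] (fun x => x.ε ^ 2 * x.Vh ^ 2) :=
    (isBigO_refl _ _).mul (isBigO_U.pow 2)
  have hVt : (fun x : Point => (x.V + x.Vh) * x.Vt) =O[𝓐] (fun x => x.Vh * |x.Vt|) :=
    ((isBigO_V.add (isBigO_refl _ _)).congr_right fun x => by ring).mul
      (isBigO_abs_right.2 (isBigO_refl _ _))
  refine (hεU.neg_left.add_add_of_nonneg hVt (.of_forall fun x => by positivity)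
    (hpos.mono fun x hVh => by positivity)).congr_left fun x => ?_
  simp only [A, V]; ring

theorem isBigO_A_rpow_sub (k : ℝ) :
    (fun x : Point => x.A ^ k - x.Vh ^ (2 * k))
      =O[𝓐] (fun x => x.ε ^ 2 * x.Vh ^ (2 * k) + x.Vh ^ (2 * k - 1) * |x.Vt|) := by
  obtain ⟨L, -, hL⟩ := exists_abs_rpow_sub_rpow_le_mul k (l := 3 / 16) (u := 9 / 4)
    (by norm_num) ⟨by norm_num, by norm_num⟩
  have hpos : ∀ᶠ x : Point in 𝓐, 0 < x.Vh := eventually_principal.2 fun x hx => hx.Vh_pos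
  refine ((isBigO_principal.2 ⟨L, fun x (hx : x.Admissible ε₁ Λ R) => ?_⟩).trans
    ((isBigO_refl (fun x : Point => (x.Vh ^ 2) ^ (k - 1)) _).mul
      isBigO_A_sub_Vh_sq)).trans_eventuallyEq (hpos.mono fun x hVh => ?_)
  · have hVh := hx.Vh_pos
    rw [rpow_two_mul hVh.le, norm_eq_abs, norm_mul, norm_of_nonneg (by positivity), norm_eq_abs,
      ← mul_assoc]
    exact hL _ (by positivity) _ hx.A_mem_Icc
  · simp only
    rw [rpow_sub_one (by positivity), rpow_sub_one hVh.ne', rpow_two_mul hVh.le]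
    field_simp

theorem isBigO_G₁_sub {f : ℝ → ℝ} {k K c : ℝ} (m : ℝ) (hk : 0 < k) (hkK : k ≤ K)
    (hf : ∀ τ, |f τ - |τ| ^ k| ≤ c * |τ| ^ K) :
    (fun x : Point => x.G₁ f k m - (1 / (m + x.ω m) - 1 / (2 * m)) * x.Vh
        - k * x.ε ^ 2 * x.V ^ (2 * k - 1) * x.U ^ 2)
      =O[𝓐] (fun x => (x.ε ^ (2 * K / k - 2) + x.ε ^ 4) * x.Vh ^ (2 * k + 1)
        + x.Vh ^ (2 * k - 1) * x.Vt ^ 2) := by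
  have hpos : ∀ᶠ x : Point in 𝓐, 0 < x.ε ∧ 0 < x.Vh :=
    eventually_principal.2 fun x hx => ⟨hx.ε_pos, hx.Vh_pos⟩
  have hr : (fun x : Point => x.ε ^ (-2 : ℝ) * (f (x.τ k) - x.ε ^ 2 * x.A ^ k) * x.V)
      =O[𝓐] (fun x => x.ε ^ (2 * K / k - 2) * x.Vh ^ (2 * k + 1)) := by
    refine (((isBigO_refl _ _).mul (isBigO_f_τ_sub hk hkK hf)).mul
      isBigO_V).trans_eventuallyEq ?_
    filter_upwards [hpos] with x ⟨hε, hVh⟩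
    rw [rpow_add_one hVh.ne', sub_eq_neg_add, rpow_add hε]
    ring
  have hsum := (hr.add_add_of_nonneg (isBigO_taylor_U k)
    (hpos.mono fun x ⟨hε, hVh⟩ => by positivity) (hpos.mono fun x ⟨hε, hVh⟩ => by positivity)
    ).add_add_of_nonneg (isBigO_taylor_Vt k)
    (hpos.mono fun x ⟨hε, hVh⟩ => by positivity) (hpos.mono fun x ⟨hε, hVh⟩ => by positivity)
  refine (isBigO_neg_left.2 hsum).congr' ?_ (.of_eq (by ext; ring))
  filter_upwards [hpos] with x ⟨hε, hVh⟩
  have hinv : x.ε ^ (-2 : ℝ) * x.ε ^ 2 = 1 := by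
    rw [rpow_neg hε.le, rpow_two, inv_mul_cancel₀ (by positivity)]
  simp only [Point.G₁]
  linear_combination (x.A ^ k * x.V) * hinv

theorem isBigO_G₂_sub {f : ℝ → ℝ} {k K c κ : ℝ} (m : ℝ) (hk : 0 < k) (hkK : k ≤ K)
    (hf : ∀ τ, |f τ - |τ| ^ k| ≤ c * |τ| ^ K) (hκ₁ : κ ≤ 1) (hκK : κ ≤ K / k - 1) :
    (fun x : Point => x.G₂ f k m - x.ε ^ 2 * x.Vh ^ (2 * k) * x.Uh - (m - x.ω m) * x.Uh
        - x.ε ^ 2 * x.Vh ^ (2 * k) * x.Ut)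
      =O[𝓐] (fun x => (x.ε ^ (2 + 2 * κ) * x.Vh ^ (2 * k)
        + x.ε ^ 2 * x.Vh ^ (2 * k - 1) * |x.Vt|) * |x.U|) := by
  have hpos : ∀ᶠ x : Point in 𝓐, 0 < x.ε ∧ 0 < x.Vh :=
    eventually_principal.2 fun x hx => ⟨hx.ε_pos, hx.Vh_pos⟩
  have hε_mul : ∀ᶠ x : Point in 𝓐, x.ε ^ (2 + 2 * κ) = x.ε ^ 2 * x.ε ^ (2 * κ) :=
    hpos.mono fun x ⟨hε, _⟩ => by rw [rpow_add hε, rpow_two]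
  have hLip : (fun x : Point => x.A ^ k - x.Vh ^ (2 * k))
      =O[𝓐] (fun x => x.ε ^ (2 * κ) * x.Vh ^ (2 * k) + x.Vh ^ (2 * k - 1) * |x.Vt|) :=
    (isBigO_A_rpow_sub k).trans <| ((isBigO_ε_sq hκ₁).mul (isBigO_refl _ _)).add_add_of_nonneg
      (isBigO_refl _ _) (hpos.mono fun x ⟨hε, hVh⟩ => by positivity)
      (hpos.mono fun x ⟨hε, hVh⟩ => by positivity)
  have he : (fun x : Point => f (x.τ k) - x.ε ^ 2 * x.A ^ k)
      =O[𝓐] (fun x => x.ε ^ 2 * (x.ε ^ (2 * κ) * x.Vh ^ (2 * k)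
        + x.Vh ^ (2 * k - 1) * |x.Vt|)) := by
    have h : (fun x : Point => f (x.τ k) - x.ε ^ 2 * x.A ^ k)
        =O[𝓐] (fun x => x.ε ^ 2 * (x.ε ^ (2 * κ) * x.Vh ^ (2 * k))) :=
      ((isBigO_f_τ_sub hk hkK hf).trans ((isBigO_ε_rpow (a := 2 + 2 * κ)
        (by rw [mul_div_assoc]; linarith)).mul (isBigO_refl _ _))).trans_eventuallyEq
        (hε_mul.mono fun x hx => by dsimp only; rw [hx, mul_assoc])
    exact h.trans ((isBigO_refl _ _).mul (isBigO_self_add_of_nonneg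
      (hpos.mono fun x ⟨hε, hVh⟩ => by positivity) (hpos.mono fun x ⟨hε, hVh⟩ => by positivity)))
  refine ((he.add ((isBigO_refl _ _).mul hLip)).mul
    (isBigO_abs_right.2 (isBigO_refl Point.U _))).congr' (.of_eq ?_) ?_
  · ext x; simp only [Point.G₂, Point.U]; ring
  · filter_upwards [hε_mul] with x hx
    rw [hx]; ring

theorem isBigO_ε_sq_mul_Vh {k κ : ℝ} (hκ : κ ≤ 1) :
    (fun x : Point => x.ε ^ 2 * x.Vh)
      =O[𝓐] (fun x => x.ε ^ (2 * κ) * x.Vh + x.Vh ^ (2 * k - 1) * x.Vt ^ 2) := by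
  have hpos : ∀ᶠ x : Point in 𝓐, 0 < x.ε ∧ 0 < x.Vh :=
    eventually_principal.2 fun x hx => ⟨hx.ε_pos, hx.Vh_pos⟩
  exact ((isBigO_ε_sq hκ).mul (isBigO_refl _ _)).trans <| isBigO_self_add_of_nonneg
    (hpos.mono fun x ⟨hε, hVh⟩ => by positivity) (hpos.mono fun x ⟨hε, hVh⟩ => by positivity)

theorem isBigO_G₁ {f : ℝ → ℝ} {k K c κ m : ℝ} (hm : 0 < m) (hk : 0 < k) (hkK : k ≤ K)
    (hf : ∀ τ, |f τ - |τ| ^ k| ≤ c * |τ| ^ K) (hκ₁ : κ ≤ 1) (hκK : κ ≤ K / k - 1) :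
    (fun x : Point => x.G₁ f k m)
      =O[𝓐] (fun x => x.ε ^ (2 * κ) * x.Vh + x.Vh ^ (2 * k - 1) * x.Vt ^ 2) := by
  have hpos : ∀ᶠ x : Point in 𝓐, 0 < x.ε ∧ 0 < x.Vh :=
    eventually_principal.2 fun x hx => ⟨hx.ε_pos, hx.Vh_pos⟩
  have hsub := (isBigO_G₁_sub m hk hkK hf).trans <| IsBigO.add_add_of_nonneg
    (((isBigO_ε_rpow (a := 2 * κ) (by rw [mul_div_assoc]; linarith)).add
      ((isBigO_ε_rpow (a := 2 * κ) (b := 4) (by linarith)).congr_left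
        fun _ => rpow_ofNat _ 4)).mul (isBigO_Vh_rpow_of_one_le (by linarith)))
    (isBigO_refl _ _) (hpos.mono fun x ⟨hε, hVh⟩ => by positivity)
    (hpos.mono fun x ⟨hε, hVh⟩ => by positivity)
  have hcoef : (fun x : Point => (1 / (m + x.ω m) - 1 / (2 * m)) * x.Vh)
      =O[𝓐] (fun x => x.ε ^ 2 * x.Vh) :=
    (IsBigO.of_bound (1 / (2 * m ^ 3)) (.of_forall fun x => by
      rw [ω, norm_of_nonneg (one_div_add_sqrt_sub_nonneg hm _), norm_of_nonneg (sq_nonneg _)]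
      exact (one_div_add_sqrt_sub_le hm _).trans_eq (by ring))).mul (isBigO_refl _ _)
  have hU : (fun x : Point => k * (x.ε ^ 2 * x.V ^ (2 * k - 1) * x.U ^ 2))
      =O[𝓐] (fun x => x.ε ^ 2 * x.Vh) := by
    refine ((((isBigO_refl _ _).mul (isBigO_V_rpow _)).mul (isBigO_U.pow 2)).const_mul_left k
      |>.trans_eventuallyEq ?_).trans ((isBigO_refl _ _).mul
        (isBigO_Vh_rpow_of_one_le (p := 2 * k + 1) (by linarith)))
    filter_upwards [hpos] with x ⟨hε, hVh⟩
    rw [mul_assoc, ← rpow_two x.Vh, ← rpow_add hVh]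
    ring_nf
  refine (hsub.add ((hcoef.add hU).trans (isBigO_ε_sq_mul_Vh hκ₁))).congr_left fun x => ?_
  simp only [G₁]; ring

theorem isBigO_G₂ {f : ℝ → ℝ} {k K c m : ℝ} (hm : 0 < m) (hk : 0 < k) (hkK : k ≤ K)
    (hf : ∀ τ, |f τ - |τ| ^ k| ≤ c * |τ| ^ K) :
    (fun x : Point => x.G₂ f k m) =O[𝓐] (fun x => x.ε ^ 2 * x.Vh) := by
  have hfτ : (fun x : Point => f (x.τ k)) =O[𝓐] (fun x => x.ε ^ 2 * x.Vh ^ (2 * k)) :=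
    (((isBigO_f_τ_sub hk hkK hf).trans (((isBigO_ε_rpow (a := 2)
      (by rw [mul_div_assoc]; nlinarith [(one_le_div hk).2 hkK])).congr_right
        fun _ => rpow_two _).mul (isBigO_refl _ _))).add
      ((isBigO_refl _ _).mul (isBigO_A_rpow hk.le))).congr_left fun x => by ring
  have hUh : (fun x : Point => (m - x.ω m) * x.Uh) =O[𝓐] (fun x => x.ε ^ 2 * x.Vh) :=
    isBigO_principal.2 ⟨R / m, fun x (hx : x.Admissible ε₁ Λ R) => by
      have := hx.Vh_pos
      have hω : 0 ≤ m - x.ω m := sub_nonneg.2 (sqrt_sq_sub_sq_le hm.le x.ε)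
      rw [norm_mul, norm_of_nonneg hω, norm_eq_abs, norm_of_nonneg (by positivity)]
      calc (m - x.ω m) * |x.Uh| ≤ x.ε ^ 2 / m * (R * x.Vh) :=
            mul_le_mul (sub_sqrt_sq_sub_sq_le hm x.ε) hx.abs_Uh_le (abs_nonneg _) (by positivity)
        _ = R / m * (x.ε ^ 2 * x.Vh) := by ring⟩
  refine ((hfτ.mul isBigO_U).trans_eventuallyEq ?_ |>.trans ((isBigO_refl _ _).mul
    (isBigO_Vh_rpow_of_one_le (p := 2 * k + 1) (by linarith)))).add hUh
  filter_upwards [eventually_principal.2 fun x (hx : x.Admissible ε₁ Λ R) => hx.Vh_pos]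
    with x hVh
  rw [mul_assoc, ← rpow_add_one hVh.ne']

theorem isBigO_abs_G₁_add_abs_G₂ {f : ℝ → ℝ} {k K c κ m : ℝ} (hm : 0 < m) (hk : 0 < k)
    (hkK : k ≤ K) (hf : ∀ τ, |f τ - |τ| ^ k| ≤ c * |τ| ^ K) (hκ₁ : κ ≤ 1) (hκK : κ ≤ K / k - 1) :
    (fun x : Point => |x.G₁ f k m| + |x.G₂ f k m|)
      =O[𝓐] (fun x => x.ε ^ (2 * κ) * x.Vh + x.Vh ^ (2 * k - 1) * x.Vt ^ 2) :=
  (isBigO_abs_left.2 (isBigO_G₁ hm hk hkK hf hκ₁ hκK)).add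
    (isBigO_abs_left.2 ((isBigO_G₂ hm hk hkK hf).trans (isBigO_ε_sq_mul_Vh hκ₁)))

end Point

theorem stmt9_general (k K : ℝ) (hk : 0 < k) (hkK : k < K) (m Λ ε₁ R c : ℝ)
    (hm : 0 < m)
    (f : ℝ → ℝ)
    (hf1 : ∀ τ : ℝ, |f τ - |τ| ^ k| ≤ c * |τ| ^ K) :
    ∃ C : ℝ, ∀ ε ∈ Set.Ioo 0 ε₁, ∀ Vh Uh Vt Ut : ℝ,
      Vh ∈ Set.Icc (-Λ) Λ → Uh ∈ Set.Icc (-Λ) Λ →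
      Vt ∈ Set.Icc (-Λ) Λ → Ut ∈ Set.Icc (-Λ) Λ →
      ∀ ω V U : ℝ, ω = Real.sqrt (m ^ 2 - ε ^ 2) → V = Vh + Vt → U = Uh + Ut →
      ε₁ * |U| ≤ V / 2 → |Vt| ≤ Vh / 2 → |Uh| ≤ R * Vh →
      ∀ G₁ G₂ : ℝ,
      G₁ = -(ε ^ (-2 : ℝ)) * f (ε ^ (2 / k) * (V ^ 2 - ε ^ 2 * U ^ 2)) * V
            + Vh ^ (2 * k + 1) + (1 + 2 * k) * Vh ^ (2 * k) * Vt
            + (1 / (m + ω) - 1 / (2 * m)) * Vh →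
      G₂ = f (ε ^ (2 / k) * (V ^ 2 - ε ^ 2 * U ^ 2)) * U + (m - ω) * Uh →
      (|G₁ - (1 / (m + ω) - 1 / (2 * m)) * Vh - k * ε ^ 2 * V ^ (2 * k - 1) * U ^ 2|
          ≤ C * ((ε ^ (2 * K / k - 2) + ε ^ 4) * Vh ^ (2 * k + 1)
                + Vh ^ (2 * k - 1) * Vt ^ 2)) ∧
      (|G₂ - ε ^ 2 * Vh ^ (2 * k) * Uh - (m - ω) * Uh|
          ≤ C * (ε ^ (2 + 2 * min 1 (K / k - 1)) * Vh ^ (2 * k)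
                + ε ^ 2 * Vh ^ (2 * k - 1) * |Vt|) * |U|
            + ε ^ 2 * Vh ^ (2 * k) * |Ut|) ∧
      (|G₁| + |G₂| ≤ C * ε ^ (2 * min 1 (K / k - 1)) * Vh
            + C * Vh ^ (2 * k - 1) * Vt ^ 2) := by
  obtain ⟨C₁, h₁⟩ :=
    (Point.isBigO_G₁_sub (ε₁ := ε₁) (Λ := Λ) (R := R) m hk hkK.le hf1).exists_forall_abs_le
  obtain ⟨C₂, h₂⟩ := (Point.isBigO_G₂_sub (ε₁ := ε₁) (Λ := Λ) (R := R) m hk hkK.le hf1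
    (min_le_left _ _) (min_le_right _ _)).exists_forall_abs_le
  obtain ⟨C₃, h₃⟩ := (Point.isBigO_abs_G₁_add_abs_G₂ (ε₁ := ε₁) (Λ := Λ) (R := R) hm hk hkK.le
    hf1 (min_le_left _ _) (min_le_right _ _)).exists_forall_abs_le
  refine ⟨max C₁ (max C₂ C₃), ?_⟩
  rintro ε ⟨hε, hεε₁⟩ Vh Uh Vt Ut ⟨-, hVhΛ⟩ - - - ω V U rfl rfl rfl hU hVt hUh G₁ G₂ rfl rfl
  rcases (show 0 ≤ Vh by linarith [abs_nonneg Vt]).eq_or_lt with rfl | hVh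
  · obtain rfl : Vt = 0 := abs_nonpos_iff.1 (by simpa using hVt)
    obtain rfl : Uh = 0 := abs_nonpos_iff.1 (by simpa using hUh)
    obtain rfl : Ut = 0 :=
      abs_nonpos_iff.1 (nonpos_of_mul_nonpos_right (by simpa using hU) (hε.trans hεε₁))
    simp [zero_rpow (by positivity : 2 * k ≠ 0), zero_rpow (by positivity : 2 * k + 1 ≠ 0)]
  have hx : Point.Admissible ⟨ε, Vh, Uh, Vt, Ut⟩ ε₁ Λ R := ⟨hε, hεε₁, hVh, hVhΛ, hVt, hU, hUh⟩
  have bound₁ := h₁ (max C₁ (max C₂ C₃)) (le_max_left _ _) _ hx (by dsimp only; positivity)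
  have bound₂ := h₂ (max C₁ (max C₂ C₃)) ((le_max_left _ _).trans (le_max_right _ _)) _ hx
    (by dsimp only; positivity)
  have bound₃ := h₃ (max C₁ (max C₂ C₃)) ((le_max_right _ _).trans (le_max_right _ _)) _ hx
    (by dsimp only; positivity)
  refine ⟨bound₁, ?_, (le_abs_self _).trans (bound₃.trans_eq (by ring))⟩
  refine (sub_le_iff_le_add.1 (abs_sub_abs_le_abs_sub _ (ε ^ 2 * Vh ^ (2 * k) * Ut))).trans
    (add_le_add (bound₂.trans_eq (mul_assoc _ _ _).symm) ?_)
  rw [abs_mul, abs_of_nonneg (by positivity)]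

/-- improved bounds on `G₁`, `G₂`, Lemma `g1-g2-bounds-better`:
with `ω = √(m²−ε²)`, `V = V̂+Ṽ`, `U = Û+Ũ`,
`G₁ = −ε⁻² f(ε^{2/k}(V²−ε²U²)) V + V̂^{2k+1} + (1+2k) V̂^{2k} Ṽ + (1/(m+ω) − 1/(2m)) V̂`,
`G₂ = f(ε^{2/k}(V²−ε²U²)) U + (m−ω) Û`, one has the three stated inequalities,
where `κ = min(1, K/k − 1)`. -/
theorem stmt9 (k K : ℝ) (hk : 0 < k) (hkK : k < K) (m Λ ε₁ R c : ℝ)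
    (hm : 0 < m) (hΛ : 0 < Λ) (hε₁ : ε₁ ∈ Set.Ioo 0 m) (hR : 0 < R)
    (f : ℝ → ℝ)
    (hf1 : ∀ τ : ℝ, |f τ - |τ| ^ k| ≤ c * |τ| ^ K)
    (hf2 : ∀ τ : ℝ, |f τ| ≤ (c + 1) * |τ| ^ k) :
    ∃ C : ℝ, ∀ ε ∈ Set.Ioo 0 ε₁, ∀ Vh Uh Vt Ut : ℝ,
      Vh ∈ Set.Icc (-Λ) Λ → Uh ∈ Set.Icc (-Λ) Λ →
      Vt ∈ Set.Icc (-Λ) Λ → Ut ∈ Set.Icc (-Λ) Λ →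
      ∀ ω V U : ℝ, ω = Real.sqrt (m ^ 2 - ε ^ 2) → V = Vh + Vt → U = Uh + Ut →
      ε₁ * |U| ≤ V / 2 → |Vt| ≤ Vh / 2 → |Uh| ≤ R * Vh →
      ∀ G₁ G₂ : ℝ,
      G₁ = -(ε ^ (-2 : ℝ)) * f (ε ^ (2 / k) * (V ^ 2 - ε ^ 2 * U ^ 2)) * V
            + Vh ^ (2 * k + 1) + (1 + 2 * k) * Vh ^ (2 * k) * Vt
            + (1 / (m + ω) - 1 / (2 * m)) * Vh →
      G₂ = f (ε ^ (2 / k) * (V ^ 2 - ε ^ 2 * U ^ 2)) * U + (m - ω) * Uh →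
      (|G₁ - (1 / (m + ω) - 1 / (2 * m)) * Vh - k * ε ^ 2 * V ^ (2 * k - 1) * U ^ 2|
          ≤ C * ((ε ^ (2 * K / k - 2) + ε ^ 4) * Vh ^ (2 * k + 1)
                + Vh ^ (2 * k - 1) * Vt ^ 2)) ∧
      (|G₂ - ε ^ 2 * Vh ^ (2 * k) * Uh - (m - ω) * Uh|
          ≤ C * (ε ^ (2 + 2 * min 1 (K / k - 1)) * Vh ^ (2 * k)
                + ε ^ 2 * Vh ^ (2 * k - 1) * |Vt|) * |U|
            + ε ^ 2 * Vh ^ (2 * k) * |Ut|) ∧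
      (|G₁| + |G₂| ≤ C * ε ^ (2 * min 1 (K / k - 1)) * Vh
            + C * Vh ^ (2 * k - 1) * Vt ^ 2) :=
  stmt9_general k K hk hkK m Λ ε₁ R c hm f hf1
end

section
/- Let k > 0, K > k, κ = min(1, K/k − 1), m > 0, Λ > 0, b₂ > 0, c < ∞, ε₁ ∈ (0, m) with b₂ ε₁^{2κ} ≤ 1/2. Let f: ℝ → ℝ be continuous on ℝ and differentiable on ℝ∖{0}, satisfying |f(τ) − |τ|^k| ≤ c|τ|^K and |τ f'(τ) − k|τ|^k| ≤ c|τ|^K for all τ ≠ 0, and |f(τ)| ≤ (c+1)|τ|^k for all τ. Then there exists C < ∞ such that for every ε ∈ (0, ε₁) and all real numbers V̂, Û, Ṽ, Ũ ∈ [−Λ, Λ] with V̂ > 0, |Ṽ| ≤ b₂ ε^{2κ} V̂, and ε₁|Û + Ũ| ≤ (V̂ + Ṽ)/2, setting V = V̂ + Ṽ, U = Û + Ũ, and τ = ε^{2/k}(V² − ε²U²) (which is then strictly positive), one has: | −2 f'(τ) ε^{2/k − 2} V² − ε^{−2} f(τ) + (1+2k) V̂^{2k} | ≤ C ε^{2κ},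 | 2 f'(τ) ε^{2/k} V U | ≤ C ε^{2κ}, and | f(τ) − 2 f'(τ) ε^{2+2/k} U² | ≤ C ε^{2κ}. -/
/-!
Put `D = V² - ε²U²`, so that `τ = ε^{2/k} D` and `τ^k = ε² D^k`. The hypotheses on `f` give
`f(τ) = ε² (D^k + O(ρ))` and `τ f'(τ) = ε² (k D^k + O(ρ))` with `ρ = ε^{2K/k-2} ≤ C ε^{2κ}`.
Substituting, the two entries involving `U` are `O(ε²)`, while the first one becomes
`(1+2k) V̂^{2k} - D^k - 2k D^{k-1} V² + O(ρ)`. This leading term vanishes at `D = V² = V̂²`,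
and since `t ↦ t^p` is Lipschitz on `[1/2, 3/2]` it is bounded by the relative errors
`|Ṽ|/V̂ ≤ b₂ ε^{2κ}` and `ε²U²/V² = O(ε²)`.
-/

open Real Set
open scoped NNReal

lemma exists_lipschitzOnWith_rpow (p : ℝ) :
    ∃ L, LipschitzOnWith L (fun x : ℝ => x ^ p) (Icc (1 / 2) (3 / 2)) :=
  ContDiffOn.exists_lipschitzOnWith (n := 1) (fun x hx =>
      (contDiffAt_rpow_const_of_ne (by linarith [hx.1] : (0 : ℝ) < x).ne').contDiffWithinAt)
    one_ne_zero (convex_Icc _ _) isCompact_Icc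

lemma exists_abs_rpow_sub_rpow_le_s10 (p : ℝ) :
    ∃ L : ℝ≥0, ∀ x y : ℝ, 0 < y → |x - y| ≤ y / 2 →
      |x ^ p - y ^ p| ≤ L * y ^ p * (|x - y| / y) := by
  obtain ⟨L, hL⟩ := exists_lipschitzOnWith_rpow p
  refine ⟨L, fun x y hy hxy => ?_⟩
  rw [abs_le] at hxy
  have hx : x / y ∈ Icc (1 / 2 : ℝ) (3 / 2) :=
    ⟨by rw [le_div_iff₀ hy]; linarith, by rw [div_le_iff₀ hy]; linarith⟩
  have hlip := hL.dist_le_mul _ hx 1 (by norm_num)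
  rw [Real.dist_eq, Real.dist_eq, one_rpow, div_rpow (by linarith) hy.le, div_sub_one hy.ne',
    div_sub_one (rpow_pos_of_pos hy p).ne', abs_div, abs_div, abs_of_pos hy,
    abs_of_pos (rpow_pos_of_pos hy p), div_le_iff₀ (rpow_pos_of_pos hy p)] at hlip
  exact hlip.trans_eq (by ring)

lemma jacobian_leading_term_eq {k Vh V D : ℝ} (hV : 0 < V) :
    (1 + 2 * k) * Vh ^ (2 * k) - D ^ k - 2 * k * D ^ (k - 1) * V ^ 2 =
      (1 + 2 * k) * (Vh ^ (2 * k) - V ^ (2 * k)) + ((V ^ 2) ^ k - D ^ k)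
        + 2 * k * (((V ^ 2) ^ (k - 1) - D ^ (k - 1)) * V ^ 2) := by
  have hsq : V ^ (2 * k) = (V ^ 2) ^ k := by
    rw [← rpow_natCast_mul hV.le, Nat.cast_ofNat]
  have hsub : (V ^ 2) ^ (k - 1) * V ^ 2 = (V ^ 2) ^ k := by
    rw [rpow_sub_one (by positivity), div_mul_cancel₀ _ (by positivity)]
  rw [hsq, ← hsub]
  ring

lemma exists_abs_jacobian_leading_term_le {k : ℝ} (hk : 0 ≤ k) :
    ∃ M : ℝ≥0, ∀ B Vh V D : ℝ, 0 < Vh → |V - Vh| ≤ Vh / 2 → |D - V ^ 2| ≤ V ^ 2 / 2 →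
      Vh ^ 2 ≤ B → V ^ 2 ≤ B →
      |(1 + 2 * k) * Vh ^ (2 * k) - D ^ k - 2 * k * D ^ (k - 1) * V ^ 2|
        ≤ M * B ^ k * (|V - Vh| / Vh + |D - V ^ 2| / V ^ 2) := by
  obtain ⟨L₁, hL₁⟩ := exists_abs_rpow_sub_rpow_le_s10 (2 * k)
  obtain ⟨L₂, hL₂⟩ := exists_abs_rpow_sub_rpow_le_s10 k
  obtain ⟨L₃, hL₃⟩ := exists_abs_rpow_sub_rpow_le_s10 (k - 1)
  refine ⟨‖1 + 2 * k‖₊ * L₁ + L₂ + ‖2 * k‖₊ * L₃, fun B Vh V D hVh hV hD hVhB hVB => ?_⟩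
  have hV0 : 0 < V := by linarith [(abs_le.mp hV).1]
  have hV2 : 0 < V ^ 2 := by positivity
  set X := |V - Vh| / Vh
  set Y := |D - V ^ 2| / V ^ 2
  have hBk : 0 ≤ B ^ k := rpow_nonneg (hV2.le.trans hVB) k
  have hVhk : Vh ^ (2 * k) ≤ B ^ k := by
    have := rpow_le_rpow (sq_nonneg Vh) hVhB hk
    rwa [← rpow_natCast_mul hVh.le, Nat.cast_ofNat] at this
  have e₁ : |Vh ^ (2 * k) - V ^ (2 * k)| ≤ L₁ * B ^ k * X :=
    abs_sub_comm (V ^ (2 * k)) _ ▸ (hL₁ V Vh hVh hV).trans (by gcongr)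
  have e₂ : |(V ^ 2) ^ k - D ^ k| ≤ L₂ * B ^ k * Y :=
    abs_sub_comm (D ^ k) _ ▸ (hL₂ D (V ^ 2) hV2 hD).trans (by gcongr)
  have e₃ : |(V ^ 2) ^ (k - 1) - D ^ (k - 1)| * V ^ 2 ≤ L₃ * B ^ k * Y :=
    calc |(V ^ 2) ^ (k - 1) - D ^ (k - 1)| * V ^ 2
        ≤ L₃ * (V ^ 2) ^ (k - 1) * Y * V ^ 2 := by
          gcongr; exact abs_sub_comm (D ^ (k - 1)) _ ▸ hL₃ D (V ^ 2) hV2 hD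
      _ = L₃ * (V ^ 2) ^ k * Y := by rw [rpow_sub_one hV2.ne']; field_simp
      _ ≤ L₃ * B ^ k * Y := by gcongr
  rw [jacobian_leading_term_eq hV0]
  calc _ ≤ |1 + 2 * k| * |Vh ^ (2 * k) - V ^ (2 * k)| + |(V ^ 2) ^ k - D ^ k|
        + |2 * k| * (|(V ^ 2) ^ (k - 1) - D ^ (k - 1)| * V ^ 2) := by
        refine (abs_add_le _ _).trans (add_le_add ((abs_add_le _ _).trans ?_) ?_)
        · rw [abs_mul]
        · rw [abs_mul, abs_mul _ (V ^ 2), abs_of_pos hV2]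
    _ ≤ |1 + 2 * k| * (L₁ * B ^ k * X) + L₂ * B ^ k * Y + |2 * k| * (L₃ * B ^ k * Y) := by
        gcongr
    _ ≤ _ := by
        simp only [NNReal.coe_add, NNReal.coe_mul, coe_nnnorm, Real.norm_eq_abs]
        have hX : 0 ≤ X := by positivity
        have hY : 0 ≤ Y := by positivity
        nlinarith [mul_nonneg (mul_nonneg (abs_nonneg (1 + 2 * k)) L₁.coe_nonneg)
            (mul_nonneg hBk hY), mul_nonneg L₂.coe_nonneg (mul_nonneg hBk hX),
          mul_nonneg (mul_nonneg (abs_nonneg (2 * k)) L₃.coe_nonneg) (mul_nonneg hBk hX)]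

lemma abs_sub_le_of_rpow_scaling {g : ℝ → ℝ} {a k K c ε D B : ℝ}
    (hg : ∀ τ, τ ≠ 0 → |g τ - a * |τ| ^ k| ≤ c * |τ| ^ K) (hk : 0 < k) (hK : 0 ≤ K)
    (hc : 0 ≤ c) (hε : 0 < ε) (hD : 0 < D) (hDB : D ≤ B) :
    |g (ε ^ (2 / k) * D) - a * ε ^ 2 * D ^ k| ≤ c * B ^ K * ε ^ (2 * K / k - 2) * ε ^ 2 := by
  have hs : 0 < ε ^ (2 / k) := rpow_pos_of_pos hε _
  have h := hg _ (mul_pos hs hD).ne'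
  rw [abs_of_pos (mul_pos hs hD), mul_rpow hs.le hD.le, mul_rpow hs.le hD.le,
    ← rpow_mul hε.le, ← rpow_mul hε.le, div_mul_cancel₀ _ hk.ne', rpow_two, ← mul_assoc,
    show 2 / k * K = 2 * K / k - 2 + 2 by ring, rpow_add hε, rpow_two] at h
  calc _ ≤ c * (ε ^ (2 * K / k - 2) * ε ^ 2 * D ^ K) := h
    _ ≤ c * (ε ^ (2 * K / k - 2) * ε ^ 2 * B ^ K) := by gcongr
    _ = _ := by ring

lemma abs_le_of_abs_sub_le {a k t D x R : ℝ} (ha : 0 ≤ a) (ht : 0 ≤ t) (hD : 0 ≤ D)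
    (hx : |x - a * t * D ^ k| ≤ R * t) : |x| ≤ (a * D ^ k + R) * t := by
  have := abs_sub_abs_le_abs_sub x (a * t * D ^ k)
  rw [abs_of_nonneg (mul_nonneg (mul_nonneg ha ht) (rpow_nonneg hD k))] at this
  linarith

section JacobianEntries

/- The entries `∂G₁/∂Ṽ`, `∂G₁/∂Ũ = ∂G₂/∂Ṽ` and `∂G₂/∂Ũ`, with `F` and `d` standing for
`f τ` and `f' τ` at `τ = ε^{2/k} D`. -/

variable {k ε D V U F d R : ℝ}

lemma abs_jacobian₁₁_le {Vh : ℝ} (hε : 0 < ε) (hD : 0 < D) (hVD : 3 * V ^ 2 ≤ 4 * D)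
    (hF : |F - ε ^ 2 * D ^ k| ≤ R * ε ^ 2)
    (hd : |ε ^ (2 / k) * D * d - k * ε ^ 2 * D ^ k| ≤ R * ε ^ 2) :
    |-(2 * d * ε ^ (2 / k - 2) * V ^ 2) - ε ^ (-2 : ℝ) * F + (1 + 2 * k) * Vh ^ (2 * k)|
      ≤ |(1 + 2 * k) * Vh ^ (2 * k) - D ^ k - 2 * k * D ^ (k - 1) * V ^ 2| + 11 / 3 * R := by
  have ht : 0 < ε ^ 2 := by positivity
  have hsplit : -(2 * d * ε ^ (2 / k - 2) * V ^ 2) - ε ^ (-2 : ℝ) * F + (1 + 2 * k) * Vh ^ (2 * k)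
      = ((1 + 2 * k) * Vh ^ (2 * k) - D ^ k - 2 * k * D ^ (k - 1) * V ^ 2)
        - (F - ε ^ 2 * D ^ k) / ε ^ 2
        - 2 * (V ^ 2 / D) * ((ε ^ (2 / k) * D * d - k * ε ^ 2 * D ^ k) / ε ^ 2) := by
    rw [rpow_sub_one hD.ne', rpow_sub hε, rpow_neg hε.le, rpow_two]
    field_simp
    ring
  have h₁ : |(F - ε ^ 2 * D ^ k) / ε ^ 2| ≤ R := by
    rwa [abs_div, abs_of_pos ht, div_le_iff₀ ht]
  have h₂ : |(ε ^ (2 / k) * D * d - k * ε ^ 2 * D ^ k) / ε ^ 2| ≤ R := by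
    rwa [abs_div, abs_of_pos ht, div_le_iff₀ ht]
  have hVD' : V ^ 2 / D ≤ 4 / 3 := by
    rw [div_le_iff₀ hD]; linarith
  rw [hsplit]
  calc _ ≤ |(1 + 2 * k) * Vh ^ (2 * k) - D ^ k - 2 * k * D ^ (k - 1) * V ^ 2|
        + |(F - ε ^ 2 * D ^ k) / ε ^ 2|
        + 2 * (V ^ 2 / D) * |(ε ^ (2 / k) * D * d - k * ε ^ 2 * D ^ k) / ε ^ 2| := by
        refine (abs_sub _ _).trans (add_le_add (abs_sub _ _) (le_of_eq ?_))
        rw [abs_mul, abs_mul, abs_two, abs_of_nonneg (div_nonneg (sq_nonneg V) hD.le)]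
    _ ≤ _ := by nlinarith [mul_le_mul hVD' h₂ (abs_nonneg _) (by norm_num)]

lemma abs_jacobian₁₂_le {ε₁ : ℝ} (hk : 0 ≤ k) (hD : 0 < D) (hε₁ : 0 < ε₁)
    (hVD : 3 * V ^ 2 ≤ 4 * D) (hU : ε₁ * |U| ≤ V / 2)
    (hd : |ε ^ (2 / k) * D * d - k * ε ^ 2 * D ^ k| ≤ R * ε ^ 2) :
    |2 * d * ε ^ (2 / k) * V * U| ≤ 4 / (3 * ε₁) * (k * D ^ k + R) * ε ^ 2 := by
  have hV : 0 ≤ V := by nlinarith [abs_nonneg U]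
  have hVU : V * |U| / D ≤ 2 / (3 * ε₁) := by
    rw [div_le_div_iff₀ hD (by positivity)]
    nlinarith
  have hd' := abs_le_of_abs_sub_le hk (sq_nonneg ε) hD.le hd
  have hsplit : 2 * d * ε ^ (2 / k) * V * U = 2 * (ε ^ (2 / k) * D * d) * (V * U / D) := by
    field_simp
  rw [hsplit, abs_mul, abs_mul 2, abs_two, abs_div, abs_mul V, abs_of_nonneg hV, abs_of_pos hD]
  calc 2 * |ε ^ (2 / k) * D * d| * (V * |U| / D)
      ≤ 2 * ((k * D ^ k + R) * ε ^ 2) * (2 / (3 * ε₁)) :=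
        mul_le_mul (by linarith) hVU (div_nonneg (mul_nonneg hV (abs_nonneg U)) hD.le)
          (by linarith [(abs_nonneg _).trans hd'])
    _ = _ := by ring

lemma abs_jacobian₂₂_le (hk : 0 ≤ k) (hε : 0 < ε) (hD : 0 < D) (hUD : 3 * (ε ^ 2 * U ^ 2) ≤ D)
    (hF : |F - ε ^ 2 * D ^ k| ≤ R * ε ^ 2)
    (hd : |ε ^ (2 / k) * D * d - k * ε ^ 2 * D ^ k| ≤ R * ε ^ 2) :
    |F - 2 * d * ε ^ (2 + 2 / k) * U ^ 2| ≤ (D ^ k + R + 2 / 3 * (k * D ^ k + R)) * ε ^ 2 := by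
  have ht : 0 ≤ ε ^ 2 := sq_nonneg ε
  have hF' : |F| ≤ (1 * D ^ k + R) * ε ^ 2 :=
    abs_le_of_abs_sub_le zero_le_one ht hD.le (by rwa [one_mul])
  have hd' := abs_le_of_abs_sub_le hk ht hD.le hd
  have hUD' : ε ^ 2 * U ^ 2 / D ≤ 1 / 3 := by
    rw [div_le_iff₀ hD]; linarith
  have hsplit : F - 2 * d * ε ^ (2 + 2 / k) * U ^ 2
      = F - 2 * (ε ^ (2 / k) * D * d) * (ε ^ 2 * U ^ 2 / D) := by
    rw [rpow_add hε, rpow_two]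
    field_simp
  rw [hsplit]
  calc _ ≤ |F| + 2 * |ε ^ (2 / k) * D * d| * (ε ^ 2 * U ^ 2 / D) := by
        refine (abs_sub _ _).trans (add_le_add le_rfl (le_of_eq ?_))
        rw [abs_mul, abs_mul, abs_two,
          abs_of_nonneg (div_nonneg (mul_nonneg ht (sq_nonneg U)) hD.le)]
    _ ≤ (1 * D ^ k + R) * ε ^ 2 + 2 * ((k * D ^ k + R) * ε ^ 2) * (1 / 3) := by
        gcongr
        linarith [(abs_nonneg _).trans hd']
    _ = _ := by ring

end JacobianEntries

lemma four_mul_sq_mul_sq_le {ε ε₁ U V : ℝ} (hε : 0 ≤ ε) (hεε₁ : ε ≤ ε₁)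
    (hU : ε₁ * |U| ≤ V / 2) : 4 * (ε ^ 2 * U ^ 2) ≤ V ^ 2 := by
  have : ε * |U| ≤ V / 2 := (mul_le_mul_of_nonneg_right hεε₁ (abs_nonneg U)).trans hU
  nlinarith [sq_abs U, mul_nonneg hε (abs_nonneg U)]

lemma mul_sq_div_sq_le {ε ε₁ U V : ℝ} (hε₁ : 0 < ε₁) (hV : 0 < V) (hU : ε₁ * |U| ≤ V / 2) :
    ε ^ 2 * U ^ 2 / V ^ 2 ≤ ε ^ 2 / (4 * ε₁ ^ 2) := by
  have := four_mul_sq_mul_sq_le hε₁.le le_rfl hU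
  rw [div_le_div_iff₀ (by positivity) (by positivity)]
  nlinarith [sq_nonneg ε]

theorem exists_abs_jacobian_entries_le {k K c ε₁ Λ : ℝ} {f : ℝ → ℝ} (hk : 0 < k)
    (hkK : k ≤ K) (hc : 0 ≤ c) (hε₁ : 0 < ε₁)
    (hf1 : ∀ τ : ℝ, τ ≠ 0 → |f τ - |τ| ^ k| ≤ c * |τ| ^ K)
    (hf2 : ∀ τ : ℝ, τ ≠ 0 → |τ * deriv f τ - k * |τ| ^ k| ≤ c * |τ| ^ K) :
    ∃ C, 0 ≤ C ∧ ∀ ε Vh V U τ : ℝ, 0 < ε → ε ≤ ε₁ → 0 < Vh → Vh ≤ Λ → |V - Vh| ≤ Vh / 2 →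
      ε₁ * |U| ≤ V / 2 → τ = ε ^ (2 / k) * (V ^ 2 - ε ^ 2 * U ^ 2) →
      0 < τ ∧
      |(-(2 * deriv f τ * ε ^ (2 / k - 2) * V ^ 2) - ε ^ (-2 : ℝ) * f τ
          + (1 + 2 * k) * Vh ^ (2 * k))| ≤ C * (ε ^ 2 + ε ^ (2 * K / k - 2) + |V - Vh| / Vh) ∧
      |2 * deriv f τ * ε ^ (2 / k) * V * U| ≤ C * (ε ^ 2 + ε ^ (2 * K / k - 2) + |V - Vh| / Vh) ∧
      |f τ - 2 * deriv f τ * ε ^ (2 + 2 / k) * U ^ 2|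
          ≤ C * (ε ^ 2 + ε ^ (2 * K / k - 2) + |V - Vh| / Vh) := by
  obtain ⟨M, hM⟩ := exists_abs_jacobian_leading_term_le hk.le
  have hK : 0 ≤ K := hk.le.trans hkK
  have hKk : 0 ≤ 2 * K / k - 2 := by
    rw [sub_nonneg, le_div_iff₀ hk]; linarith
  set B := (3 / 2 * Λ) ^ 2
  set R₀ := c * B ^ K * ε₁ ^ (2 * K / k - 2)
  set C₁ := M * B ^ k * (1 + 1 / (4 * ε₁ ^ 2)) + 11 / 3 * (c * B ^ K)
  set C₂ := 4 / (3 * ε₁) * (k * B ^ k + R₀)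
  set C₃ := B ^ k + R₀ + 2 / 3 * (k * B ^ k + R₀)
  have hC₁ : 0 ≤ C₁ := by positivity
  have hC₂ : 0 ≤ C₂ := by positivity
  have hC₃ : 0 ≤ C₃ := by positivity
  refine ⟨C₁ + C₂ + C₃, by positivity, fun ε Vh V U τ hε hεε₁ hVh hVhΛ hV hU hτ => ?_⟩
  have hV0 : 0 < V := by linarith [(abs_le.mp hV).1]
  have hVB : V ^ 2 ≤ B := pow_le_pow_left₀ hV0.le (by linarith [(abs_le.mp hV).2]) 2
  have hUV := four_mul_sq_mul_sq_le hε.le hεε₁ hU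
  set D := V ^ 2 - ε ^ 2 * U ^ 2 with hD
  have hD0 : 0 < D := by nlinarith
  have hDB : D ≤ B := by nlinarith
  set R := c * B ^ K * ε ^ (2 * K / k - 2)
  have hF : |f τ - 1 * ε ^ 2 * D ^ k| ≤ R * ε ^ 2 := hτ ▸ abs_sub_le_of_rpow_scaling (g := f)
    (fun τ hτ => by simpa using hf1 τ hτ) hk hK hc hε hD0 hDB
  have hd : |τ * deriv f τ - k * ε ^ 2 * D ^ k| ≤ R * ε ^ 2 :=
    hτ ▸ abs_sub_le_of_rpow_scaling (g := fun τ => τ * deriv f τ) hf2 hk hK hc hε hD0 hDB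
  rw [one_mul] at hF
  subst hτ
  set η := ε ^ 2 + ε ^ (2 * K / k - 2) + |V - Vh| / Vh
  have hε2 := sq_nonneg ε
  have hεK := rpow_nonneg hε.le (2 * K / k - 2)
  have hρ := div_nonneg (abs_nonneg (V - Vh)) hVh.le
  have hη₁ : ε ^ 2 ≤ η := by linarith
  have hη₂ : ε ^ (2 * K / k - 2) ≤ η := by linarith
  have hη₃ : |V - Vh| / Vh ≤ η := by linarith
  refine ⟨mul_pos (rpow_pos_of_pos hε _) hD0, ?_, ?_, ?_⟩
  · have hDV : |D - V ^ 2| / V ^ 2 ≤ 1 / (4 * ε₁ ^ 2) * η := by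
      rw [hD, sub_sub_cancel_left, abs_neg, abs_of_nonneg (by positivity)]
      exact (mul_sq_div_sq_le hε₁ hV0 hU).trans (by rw [div_eq_mul_one_div, mul_comm]; gcongr)
    have hlead := hM B Vh V D hVh hV (by rw [abs_le]; constructor <;> nlinarith)
      (pow_le_pow_left₀ hVh.le (by linarith) 2) hVB
    calc _ ≤ |(1 + 2 * k) * Vh ^ (2 * k) - D ^ k - 2 * k * D ^ (k - 1) * V ^ 2| + 11 / 3 * R :=
          abs_jacobian₁₁_le hε hD0 (by linarith) hF hd
      _ ≤ M * B ^ k * (η + 1 / (4 * ε₁ ^ 2) * η) + 11 / 3 * (c * B ^ K * η) := by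
          gcongr
          · exact hlead.trans (by gcongr)
          · exact mul_le_mul_of_nonneg_left hη₂ (by positivity)
      _ = C₁ * η := by ring
      _ ≤ _ := by gcongr; linarith
  · calc _ ≤ 4 / (3 * ε₁) * (k * D ^ k + R) * ε ^ 2 :=
          abs_jacobian₁₂_le hk.le hD0 hε₁ (by linarith) hU hd
      _ ≤ C₂ * η := by simp only [C₂, R₀, R]; gcongr
      _ ≤ _ := by gcongr; linarith
  · calc _ ≤ (D ^ k + R + 2 / 3 * (k * D ^ k + R)) * ε ^ 2 :=
          abs_jacobian₂₂_le hk.le hε hD0 (by linarith) hF hd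
      _ ≤ C₃ * η := by simp only [C₃, R₀, R]; gcongr
      _ ≤ _ := by gcongr; linarith

lemma rpow_le_rpow_sub_mul_rpow {ε ε₁ a b : ℝ} (hε : 0 < ε) (hεε₁ : ε ≤ ε₁) (hab : a ≤ b) :
    ε ^ b ≤ ε₁ ^ (b - a) * ε ^ a := by
  calc ε ^ b = ε ^ (b - a) * ε ^ a := by rw [← rpow_add hε, sub_add_cancel]
    _ ≤ _ := by gcongr

theorem stmt10_general (k K : ℝ) (hk : 0 < k) (hkK : k < K) (m Λ b₂ c ε₁ : ℝ)
    (hb₂ : 0 < b₂) (hε₁ : ε₁ ∈ Set.Ioo 0 m)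
    (hb₂ε₁ : b₂ * ε₁ ^ (2 * min 1 (K / k - 1)) ≤ 1 / 2)
    (f : ℝ → ℝ)
    (hf1 : ∀ τ : ℝ, τ ≠ 0 → |f τ - |τ| ^ k| ≤ c * |τ| ^ K)
    (hf2 : ∀ τ : ℝ, τ ≠ 0 → |τ * deriv f τ - k * |τ| ^ k| ≤ c * |τ| ^ K) :
    ∃ C : ℝ, ∀ ε ∈ Set.Ioo 0 ε₁, ∀ Vh Uh Vt Ut : ℝ,
      Vh ∈ Set.Icc (-Λ) Λ → Uh ∈ Set.Icc (-Λ) Λ →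
      Vt ∈ Set.Icc (-Λ) Λ → Ut ∈ Set.Icc (-Λ) Λ →
      0 < Vh → |Vt| ≤ b₂ * ε ^ (2 * min 1 (K / k - 1)) * Vh →
      ε₁ * |Uh + Ut| ≤ (Vh + Vt) / 2 →
      ∀ V U τ : ℝ, V = Vh + Vt → U = Uh + Ut →
      τ = ε ^ (2 / k) * (V ^ 2 - ε ^ 2 * U ^ 2) →
      0 < τ ∧
      |(-(2 * deriv f τ * ε ^ (2 / k - 2) * V ^ 2) - ε ^ (-2 : ℝ) * f τ
          + (1 + 2 * k) * Vh ^ (2 * k))| ≤ C * ε ^ (2 * min 1 (K / k - 1)) ∧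
      |2 * deriv f τ * ε ^ (2 / k) * V * U| ≤ C * ε ^ (2 * min 1 (K / k - 1)) ∧
      |f τ - 2 * deriv f τ * ε ^ (2 + 2 / k) * U ^ 2|
          ≤ C * ε ^ (2 * min 1 (K / k - 1)) := by
  set κ := min 1 (K / k - 1)
  have hκ₁ : κ ≤ 1 := min_le_left _ _
  have hκK : κ ≤ K / k - 1 := min_le_right _ _
  have hκ : 0 ≤ κ := le_min zero_le_one (by rw [sub_nonneg, one_le_div hk]; exact hkK.le)
  have hc : 0 ≤ c := (abs_nonneg _).trans (by simpa using hf1 1 one_ne_zero)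
  obtain ⟨C, hC, hbound⟩ := exists_abs_jacobian_entries_le (Λ := Λ) hk hkK.le hc hε₁.1 hf1 hf2
  refine ⟨C * (ε₁ ^ ((2 : ℝ) - 2 * κ) + ε₁ ^ (2 * K / k - 2 - 2 * κ) + b₂),
    fun ε ⟨hε, hεε₁⟩ Vh Uh Vt Ut hVh _ _ _ hVh0 hVt hU V U τ hV hU' hτ => ?_⟩
  subst hV hU'
  have hVt_half : |Vt| ≤ Vh / 2 := by
    have : b₂ * ε ^ (2 * κ) ≤ 1 / 2 :=
      (mul_le_mul_of_nonneg_left (rpow_le_rpow hε.le hεε₁.le (by positivity)) hb₂.le).trans hb₂ε₁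
    nlinarith
  have hη : ε ^ 2 + ε ^ (2 * K / k - 2) + |Vh + Vt - Vh| / Vh
      ≤ (ε₁ ^ ((2 : ℝ) - 2 * κ) + ε₁ ^ (2 * K / k - 2 - 2 * κ) + b₂) * ε ^ (2 * κ) := by
    have h₁ := rpow_le_rpow_sub_mul_rpow hε hεε₁.le (show 2 * κ ≤ 2 by linarith)
    have h₂ := rpow_le_rpow_sub_mul_rpow hε hεε₁.le
      (show 2 * κ ≤ 2 * K / k - 2 by rw [mul_div_assoc]; linarith)
    have h₃ : |Vh + Vt - Vh| / Vh ≤ b₂ * ε ^ (2 * κ) := by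
      rw [add_sub_cancel_left, div_le_iff₀ hVh0]; exact hVt
    rw [rpow_two] at h₁
    linarith
  obtain ⟨hτ0, h₁, h₂, h₃⟩ := hbound ε Vh (Vh + Vt) (Uh + Ut) τ hε hεε₁.le hVh0 hVh.2
    (by rwa [add_sub_cancel_left]) hU hτ
  have hCη := mul_le_mul_of_nonneg_left hη hC
  rw [← mul_assoc] at hCη
  exact ⟨hτ0, h₁.trans hCη, h₂.trans hCη, h₃.trans hCη⟩

/-- Lemma `g-w-small`: smallness of the entries of the Jacobian
`∂G/∂(Ṽ,Ũ)`: under the stated assumptions on `f` and with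
`V = V̂+Ṽ`, `U = Û+Ũ`, `τ = ε^{2/k}(V²−ε²U²)` (which is strictly positive),
the three entries
`−2f'(τ)ε^{2/k−2}V² − ε⁻²f(τ) + (1+2k)V̂^{2k}`, `2f'(τ)ε^{2/k}VU`,
`f(τ) − 2f'(τ)ε^{2+2/k}U²` are all `O(ε^{2κ})`, where `κ = min(1, K/k − 1)`. -/
theorem stmt10 (k K : ℝ) (hk : 0 < k) (hkK : k < K) (m Λ b₂ c ε₁ : ℝ)
    (hm : 0 < m) (hΛ : 0 < Λ) (hb₂ : 0 < b₂) (hε₁ : ε₁ ∈ Set.Ioo 0 m)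
    (hb₂ε₁ : b₂ * ε₁ ^ (2 * min 1 (K / k - 1)) ≤ 1 / 2)
    (f : ℝ → ℝ) (hfc : Continuous f)
    (hfd : ∀ τ : ℝ, τ ≠ 0 → DifferentiableAt ℝ f τ)
    (hf1 : ∀ τ : ℝ, τ ≠ 0 → |f τ - |τ| ^ k| ≤ c * |τ| ^ K)
    (hf2 : ∀ τ : ℝ, τ ≠ 0 → |τ * deriv f τ - k * |τ| ^ k| ≤ c * |τ| ^ K)
    (hf3 : ∀ τ : ℝ, |f τ| ≤ (c + 1) * |τ| ^ k) :
    ∃ C : ℝ, ∀ ε ∈ Set.Ioo 0 ε₁, ∀ Vh Uh Vt Ut : ℝ,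
      Vh ∈ Set.Icc (-Λ) Λ → Uh ∈ Set.Icc (-Λ) Λ →
      Vt ∈ Set.Icc (-Λ) Λ → Ut ∈ Set.Icc (-Λ) Λ →
      0 < Vh → |Vt| ≤ b₂ * ε ^ (2 * min 1 (K / k - 1)) * Vh →
      ε₁ * |Uh + Ut| ≤ (Vh + Vt) / 2 →
      ∀ V U τ : ℝ, V = Vh + Vt → U = Uh + Ut →
      τ = ε ^ (2 / k) * (V ^ 2 - ε ^ 2 * U ^ 2) →
      0 < τ ∧
      |(-(2 * deriv f τ * ε ^ (2 / k - 2) * V ^ 2) - ε ^ (-2 : ℝ) * f τ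
          + (1 + 2 * k) * Vh ^ (2 * k))| ≤ C * ε ^ (2 * min 1 (K / k - 1)) ∧
      |2 * deriv f τ * ε ^ (2 / k) * V * U| ≤ C * ε ^ (2 * min 1 (K / k - 1)) ∧
      |f τ - 2 * deriv f τ * ε ^ (2 + 2 / k) * U ^ 2|
          ≤ C * ε ^ (2 * min 1 (K / k - 1)) :=
  stmt10_general k K hk hkK m Λ b₂ c ε₁ hb₂ hε₁ hb₂ε₁ f hf1 hf2
end

section
/- Let n ≥ 1 be an integer, m > 0, k > 0, and let u: ℝⁿ → ℝ be three times continuously differentiable and satisfy Δu(x) = u(x) − 2m |u(x)|^{2k} u(x) for all x ∈ ℝⁿ. Define w(x) = (1/k) u(x) + x·∇u(x). Then for all x ∈ ℝⁿ one has (1/(2m)) w(x) − (1/(2m)) Δw(x) − (1+2k) |u(x)|^{2k} w(x) = −(1/m) u(x). -/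
/-!
Let `D = x·∇` be the Euler operator. Symmetry of second derivatives gives `[∂ᵥ, D] = ∂ᵥ`
for every direction `v`, hence `[Δ, D] = 2Δ` and `Δw = (1/k)Δu + 2Δu + D(Δu)`.
Differentiating `Δu = Φ(u)`, `Φ(s) = s − 2m|s|^{2k}s`, along `D` gives `D(Δu) = Φ'(u) Du`
with `Φ'(s) = 1 − 2m(1+2k)|s|^{2k}` (also at `s = 0`, since `k > 0`). Substituting these,
the identity reduces to algebra.
-/

/-- The Laplacian of a function on `ℝⁿ` (modelled as `EuclideanSpace ℝ (Fin n)`),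
as the sum of the second derivatives in the coordinate directions. -/
noncomputable def laplacian {n : ℕ} (u : EuclideanSpace ℝ (Fin n) → ℝ)
    (x : EuclideanSpace ℝ (Fin n)) : ℝ :=
  ∑ i : Fin n, fderiv ℝ (fun y => fderiv ℝ u y (EuclideanSpace.single i 1)) x
    (EuclideanSpace.single i 1)

open Filter Topology

theorem hasDerivAt_abs_rpow_mul_self {p : ℝ} (hp : 0 < p) (t : ℝ) :
    HasDerivAt (fun s : ℝ => |s| ^ p * s) ((1 + p) * |t| ^ p) t := by
  rcases eq_or_ne t 0 with rfl | ht
  · rw [hasDerivAt_iff_tendsto_slope]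
    have hlim : Tendsto (fun s : ℝ => |s| ^ p) (𝓝[≠] 0) (𝓝 ((1 + p) * |0| ^ p)) := by
      have := (continuous_abs.rpow_const fun _ => Or.inr hp.le).tendsto (0 : ℝ)
      simpa [Real.zero_rpow hp.ne'] using this.mono_left nhdsWithin_le_nhds
    refine hlim.congr' ?_
    filter_upwards [self_mem_nhdsWithin] with s (hs : s ≠ 0)
    simp [slope_def_field, Real.zero_rpow hp.ne', hs]
  · have h := ((hasDerivAt_abs ht).rpow_const (p := p) (Or.inl (abs_ne_zero.mpr ht))).mul
      (hasDerivAt_id t)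
    refine h.congr_deriv ?_
    have hpow : |t| ^ (p - 1) * |t| = |t| ^ p := by
      rw [← Real.rpow_add_one (abs_ne_zero.mpr ht), sub_add_cancel]
    calc (SignType.sign t : ℝ) * p * |t| ^ (p - 1) * id t + |t| ^ p * 1
        = p * (|t| ^ (p - 1) * (SignType.sign t * t)) + |t| ^ p := by simp only [id]; ring
      _ = (1 + p) * |t| ^ p := by rw [sign_mul_self, hpow]; ring

section DirectionalDerivative

variable {E F : Type*} [NormedAddCommGroup E] [NormedSpace ℝ E]
  [NormedAddCommGroup F] [NormedSpace ℝ F]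

theorem fderiv_apply_const_apply {g : E → E →L[ℝ] F} {x : E} (hg : DifferentiableAt ℝ g x)
    (a v : E) : fderiv ℝ (fun y => g y a) x v = fderiv ℝ g x v a := by
  simp [fderiv_clm_apply hg (differentiableAt_const a)]

noncomputable def dirDeriv (v : E) (f : E → F) : E → F := fun x => fderiv ℝ f x v

noncomputable def eulerDeriv (f : E → F) : E → F := fun x => fderiv ℝ f x x

variable {f g : E → F}

theorem ContDiff.dirDeriv {m n : WithTop ℕ∞} (hf : ContDiff ℝ n f) (hmn : m + 1 ≤ n)
    (v : E) : ContDiff ℝ m (dirDeriv v f) :=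
  (hf.fderiv_right hmn).clm_apply contDiff_const

theorem ContDiff.eulerDeriv {m n : WithTop ℕ∞} (hf : ContDiff ℝ n f) (hmn : m + 1 ≤ n) :
    ContDiff ℝ m (eulerDeriv f) :=
  (hf.fderiv_right hmn).clm_apply contDiff_id

theorem dirDeriv_add (hf : Differentiable ℝ f) (hg : Differentiable ℝ g) (v : E) :
    dirDeriv v (f + g) = dirDeriv v f + dirDeriv v g := by
  funext x
  simp [dirDeriv, fderiv_add (hf x) (hg x)]

theorem dirDeriv_const_smul (hf : Differentiable ℝ f) (c : ℝ) (v : E) :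
    dirDeriv v (c • f) = c • dirDeriv v f := by
  funext x
  simp [dirDeriv, fderiv_const_smul (hf x)]

theorem eulerDeriv_comp {φ : ℝ → ℝ} {φ' : ℝ} {u : E → ℝ} {x : E}
    (hφ : HasDerivAt φ φ' (u x)) (hu : DifferentiableAt ℝ u x) :
    eulerDeriv (fun y => φ (u y)) x = φ' * eulerDeriv u x := by
  change fderiv ℝ (φ ∘ u) x x = _
  simp [(hφ.comp_hasFDerivAt x hu.hasFDerivAt).fderiv, eulerDeriv]

theorem dirDeriv_eulerDeriv (hf : ContDiff ℝ 2 f) (v : E) :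
    dirDeriv v (eulerDeriv f) = dirDeriv v f + eulerDeriv (dirDeriv v f) := by
  funext x
  have hd : DifferentiableAt ℝ (fderiv ℝ f) x :=
    ((hf.fderiv_right (m := 1) le_rfl).differentiable one_ne_zero) x
  have hsymm : fderiv ℝ (fderiv ℝ f) x v x = fderiv ℝ (fderiv ℝ f) x x v :=
    (hf.contDiffAt.isSymmSndFDerivAt (by simp)).eq v x
  change fderiv ℝ (fun y => fderiv ℝ f y y) x v
    = fderiv ℝ f x v + fderiv ℝ (fun y => fderiv ℝ f y v) x x
  rw [fderiv_clm_apply hd differentiableAt_fun_id, fderiv_apply_const_apply hd, ← hsymm]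
  simp

theorem eulerDeriv_sum {ι : Type*} (s : Finset ι) {f : ι → E → F}
    (hf : ∀ i ∈ s, Differentiable ℝ (f i)) :
    eulerDeriv (∑ i ∈ s, f i) = ∑ i ∈ s, eulerDeriv (f i) := by
  funext x
  simp [eulerDeriv, fderiv_sum fun i hi => hf i hi x]

end DirectionalDerivative

section Laplacian

variable {n : ℕ} {u f g : EuclideanSpace ℝ (Fin n) → ℝ}

theorem laplacian_eq_sum_dirDeriv (u : EuclideanSpace ℝ (Fin n) → ℝ) :
    laplacian u = ∑ i, dirDeriv (EuclideanSpace.single i 1)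
      (dirDeriv (EuclideanSpace.single i 1) u) := by
  funext x
  rw [Finset.sum_apply]
  rfl

theorem laplacian_const_smul_add (hf : ContDiff ℝ 2 f) (hg : ContDiff ℝ 2 g) (c : ℝ) :
    laplacian (c • f + g) = c • laplacian f + laplacian g := by
  have hf₁ v := (hf.dirDeriv (m := 1) le_rfl v).differentiable one_ne_zero
  have hg₁ v := (hg.dirDeriv (m := 1) le_rfl v).differentiable one_ne_zero
  simp only [laplacian_eq_sum_dirDeriv, Finset.smul_sum, ← Finset.sum_add_distrib]
  refine Finset.sum_congr rfl fun i _ => ?_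
  have hf₀ := hf.differentiable two_ne_zero
  rw [dirDeriv_add (hf₀.const_smul c) (hg.differentiable two_ne_zero), dirDeriv_const_smul hf₀,
    dirDeriv_add ((hf₁ _).const_smul c) (hg₁ _), dirDeriv_const_smul (hf₁ _)]

theorem laplacian_eulerDeriv (hu : ContDiff ℝ 3 u) :
    laplacian (eulerDeriv u) = (2 : ℝ) • laplacian u + eulerDeriv (laplacian u) := by
  have hu₂ v := hu.dirDeriv (m := 2) le_rfl v
  have hu₁ v := (hu₂ v).dirDeriv (m := 1) le_rfl v
  have hDu₂ v := (hu₂ v).eulerDeriv (m := 1) le_rfl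
  rw [laplacian_eq_sum_dirDeriv, laplacian_eq_sum_dirDeriv,
    eulerDeriv_sum _ fun i _ => (hu₁ _).differentiable one_ne_zero,
    Finset.smul_sum, ← Finset.sum_add_distrib]
  refine Finset.sum_congr rfl fun i _ => ?_
  rw [dirDeriv_eulerDeriv (hu.of_le (by norm_num)),
    dirDeriv_add ((hu₂ _).differentiable two_ne_zero) ((hDu₂ _).differentiable one_ne_zero),
    dirDeriv_eulerDeriv (hu₂ _), two_smul, add_assoc]

end Laplacian

theorem stmt11_general (n : ℕ) (m k : ℝ) (hm : 0 < m) (hk : 0 < k)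
    (u : EuclideanSpace ℝ (Fin n) → ℝ) (hu : ContDiff ℝ 3 u)
    (heq : ∀ x, laplacian u x = u x - 2 * m * |u x| ^ (2 * k) * u x) :
    ∀ x, 1 / (2 * m) * (1 / k * u x + fderiv ℝ u x x)
        - 1 / (2 * m) * laplacian (fun y => 1 / k * u y + fderiv ℝ u y y) x
        - (1 + 2 * k) * |u x| ^ (2 * k) * (1 / k * u x + fderiv ℝ u x x)
      = -(1 / m) * u x := by
  intro x
  have hΦ : HasDerivAt (fun s : ℝ => s - 2 * m * |s| ^ (2 * k) * s)
      (1 - 2 * m * ((1 + 2 * k) * |u x| ^ (2 * k))) (u x) := by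
    have h := (hasDerivAt_id (u x)).sub
      ((hasDerivAt_abs_rpow_mul_self (p := 2 * k) (by positivity) (u x)).const_mul (2 * m))
    simpa only [Pi.sub_def, id, mul_assoc] using h
  have hΔw : laplacian (fun y => 1 / k * u y + fderiv ℝ u y y) x
      = 1 / k * laplacian u x + (2 * laplacian u x + eulerDeriv (laplacian u) x) := by
    change laplacian ((1 / k) • u + eulerDeriv u) x = _
    rw [laplacian_const_smul_add (hu.of_le (by norm_num)) (hu.eulerDeriv (by norm_num)),
      laplacian_eulerDeriv hu]
    simp
  have hEΔu : eulerDeriv (laplacian u) x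
      = (1 - 2 * m * ((1 + 2 * k) * |u x| ^ (2 * k))) * fderiv ℝ u x x := by
    rw [show laplacian u = _ from funext heq]
    exact eulerDeriv_comp hΦ (hu.differentiable (by norm_num) x)
  rw [hΔw, hEΔu, heq x]
  field_simp
  ring

/-- the identity `ℓ₊((1/k)u + x·∇u) = −(1/m)u`:
if `u` is `C³` and satisfies `Δu = u − 2m|u|^{2k}u`, then
`w = (1/k)u + x·∇u` satisfies `(1/(2m))w − (1/(2m))Δw − (1+2k)|u|^{2k}w = −(1/m)u`.
Here `x·∇u(x)` is the directional derivative `fderiv ℝ u x x`. -/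
theorem stmt11 (n : ℕ) (hn : 1 ≤ n) (m k : ℝ) (hm : 0 < m) (hk : 0 < k)
    (u : EuclideanSpace ℝ (Fin n) → ℝ) (hu : ContDiff ℝ 3 u)
    (heq : ∀ x, laplacian u x = u x - 2 * m * |u x| ^ (2 * k) * u x) :
    ∀ x, 1 / (2 * m) * (1 / k * u x + fderiv ℝ u x x)
        - 1 / (2 * m) * laplacian (fun y => 1 / k * u y + fderiv ℝ u y y) x
        - (1 + 2 * k) * |u x| ^ (2 * k) * (1 / k * u x + fderiv ℝ u x x)
      = -(1 / m) * u x :=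
  stmt11_general n m k hm hk u hu heq
end
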